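/- Let h, f_S, f_T : X → ℝ be measurable functions taking values in [0,1], let μ_S and μ_T be probability measures on X possessing densities φ_S and φ_T with respect to a common σ-finite measure ν, and define ε_μ(g, f) = ∫ |g(x) − f(x)| dμ(x), ε_S(h) = ε_{μ_S}(h, f_S), ε_T(h) = ε_{μ_T}(h, f_T), and d(D_S, D_T) = ∫ |φ_S(x) − φ_T(x)| dν(x). Then the target-domain error satisfies ε_T(h) ≤ ε_S(h) + d(D_S, D_T) + min{ ∫ |f_S(x) − f_T(x)| dμ_S(x), ∫ |f_S(x) − f_T(x)| dμ_T(x) }. -/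

import Mathlib

open MeasureTheory
open scoped ENNReal NNReal

lemma density_integrable {X : Type*} [MeasurableSpace X]
    (ν : Measure X) (φ : X → ℝ) (hφ : Measurable φ) (hφ0 : ∀ x, 0 ≤ φ x)
    [IsProbabilityMeasure (ν.withDensity (fun x => ENNReal.ofReal (φ x)))] :
    Integrable φ ν := by
  refine ⟨hφ.aestronglyMeasurable, ?_⟩
  have h1 : ∫⁻ x, ENNReal.ofReal (φ x) ∂ν = 1 := by
    have := measure_univ (μ := ν.withDensity (fun x => ENNReal.ofReal (φ x)))
    rwa [withDensity_apply _ MeasurableSet.univ, Measure.restrict_univ] at this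
  have h2 : ∀ x, ‖φ x‖ₑ = ENNReal.ofReal (φ x) := by
    intro x
    rw [Real.enorm_eq_ofReal (hφ0 x)]
  simp only [HasFiniteIntegral, h2, h1]
  exact ENNReal.one_lt_top

lemma shift_lemma {X : Type*} [MeasurableSpace X]
    (ν : Measure X)
    (φS φT : X → ℝ) (hφS : Measurable φS) (hφT : Measurable φT)
    (hφS0 : ∀ x, 0 ≤ φS x) (hφT0 : ∀ x, 0 ≤ φT x)
    [IsProbabilityMeasure (ν.withDensity (fun x => ENNReal.ofReal (φS x)))]
    [IsProbabilityMeasure (ν.withDensity (fun x => ENNReal.ofReal (φT x)))]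
    (g : X → ℝ) (hg : Measurable g) (hg0 : ∀ x, 0 ≤ g x) (hg1 : ∀ x, g x ≤ 1) :
    (∫ x, g x ∂(ν.withDensity (fun x => ENNReal.ofReal (φT x)))) ≤
      (∫ x, g x ∂(ν.withDensity (fun x => ENNReal.ofReal (φS x))))
      + ∫ x, |φS x - φT x| ∂ν := by
  have hIS : Integrable φS ν := density_integrable ν φS hφS hφS0
  have hIT : Integrable φT ν := density_integrable ν φT hφT hφT0
  have hrw : ∀ (φ : X → ℝ), Measurable φ → (∀ x, 0 ≤ φ x) →
      (∫ x, g x ∂(ν.withDensity (fun x => ENNReal.ofReal (φ x)))) =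
        ∫ x, φ x * g x ∂ν := by
    intro φ hφm hφ0
    have heq : (fun x => ENNReal.ofReal (φ x)) = fun x => ((φ x).toNNReal : ℝ≥0∞) := rfl
    rw [heq, integral_withDensity_eq_integral_smul (hφm.real_toNNReal) g]
    congr 1
    ext x
    simp [NNReal.smul_def, Real.coe_toNNReal _ (hφ0 x)]
  rw [hrw φS hφS hφS0, hrw φT hφT hφT0]
  have hI1 : Integrable (fun x => φT x * g x) ν := by
    refine hIT.mono ((hφT.mul hg).aestronglyMeasurable) ?_
    filter_upwards with x
    rw [norm_mul, Real.norm_eq_abs, Real.norm_eq_abs, abs_of_nonneg (hφT0 x),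
      abs_of_nonneg (hg0 x)]
    nlinarith [hg1 x, hφT0 x]
  have hI2 : Integrable (fun x => φS x * g x) ν := by
    refine hIS.mono ((hφS.mul hg).aestronglyMeasurable) ?_
    filter_upwards with x
    rw [norm_mul, Real.norm_eq_abs, Real.norm_eq_abs, abs_of_nonneg (hφS0 x),
      abs_of_nonneg (hg0 x)]
    nlinarith [hg1 x, hφS0 x]
  have hI3 : Integrable (fun x => |φS x - φT x|) ν := (hIS.sub hIT).abs
  calc ∫ x, φT x * g x ∂ν ≤ ∫ x, (φS x * g x + |φS x - φT x|) ∂ν := by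
        refine integral_mono hI1 (hI2.add hI3) ?_
        intro x
        have k1 : (φT x - φS x) * g x ≤ |φT x - φS x| * g x :=
          mul_le_mul_of_nonneg_right (le_abs_self _) (hg0 x)
        have k2 : |φT x - φS x| * g x ≤ |φT x - φS x| :=
          mul_le_of_le_one_right (abs_nonneg _) (hg1 x)
        have k3 : |φT x - φS x| = |φS x - φT x| := abs_sub_comm _ _
        simp only
        nlinarith
    _ = _ := integral_add hI2 hI3

/-- Theorem 1 (Ben-David style target-error bound): the target-domain error is
bounded by the source error, the total variation divergence of the densities,
and the minimum labeling-function discrepancy over the two domains. -/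
theorem target_error_bound
    {X : Type*} [MeasurableSpace X]
    (ν : Measure X) [SigmaFinite ν]
    (φS φT : X → ℝ) (hφS : Measurable φS) (hφT : Measurable φT)
    (hφS0 : ∀ x, 0 ≤ φS x) (hφT0 : ∀ x, 0 ≤ φT x)
    (μS μT : Measure X)
    [IsProbabilityMeasure μS] [IsProbabilityMeasure μT]
    (hμS : μS = ν.withDensity (fun x => ENNReal.ofReal (φS x)))
    (hμT : μT = ν.withDensity (fun x => ENNReal.ofReal (φT x)))
    (h fS fT : X → ℝ)
    (hh : Measurable h) (hfS : Measurable fS) (hfT : Measurable fT)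
    (hh01 : ∀ x, h x ∈ Set.Icc (0 : ℝ) 1)
    (hfS01 : ∀ x, fS x ∈ Set.Icc (0 : ℝ) 1)
    (hfT01 : ∀ x, fT x ∈ Set.Icc (0 : ℝ) 1) :
    (∫ x, |h x - fT x| ∂μT) ≤
      (∫ x, |h x - fS x| ∂μS)
      + (∫ x, |φS x - φT x| ∂ν)
      + min (∫ x, |fS x - fT x| ∂μS) (∫ x, |fS x - fT x| ∂μT) := by
  subst hμS hμT
  -- abbreviations
  have habs01 : ∀ (a b : X → ℝ), (∀ x, a x ∈ Set.Icc (0:ℝ) 1) →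
      (∀ x, b x ∈ Set.Icc (0:ℝ) 1) → ∀ x, 0 ≤ |a x - b x| ∧ |a x - b x| ≤ 1 := by
    intro a b ha hb x
    obtain ⟨ha0, ha1⟩ := ha x
    obtain ⟨hb0, hb1⟩ := hb x
    exact ⟨abs_nonneg _, abs_le.mpr ⟨by linarith, by linarith⟩⟩
  have hint : ∀ (μ : Measure X) [IsFiniteMeasure μ] (a b : X → ℝ),
      Measurable a → Measurable b → (∀ x, a x ∈ Set.Icc (0:ℝ) 1) →
      (∀ x, b x ∈ Set.Icc (0:ℝ) 1) → Integrable (fun x => |a x - b x|) μ := by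
    intro μ _ a b ha hb ha01 hb01
    refine Integrable.mono' (integrable_const (1:ℝ)) ((ha.sub hb).abs.aestronglyMeasurable) ?_
    filter_upwards with x
    rw [Real.norm_eq_abs, abs_abs]
    exact (habs01 a b ha01 hb01 x).2
  set μS := ν.withDensity (fun x => ENNReal.ofReal (φS x)) with hmS
  set μT := ν.withDensity (fun x => ENNReal.ofReal (φT x)) with hmT
  have tri : ∀ (μ : Measure X) [IsFiniteMeasure μ] (a b c : X → ℝ),
      Measurable a → Measurable b → Measurable c →
      (∀ x, a x ∈ Set.Icc (0:ℝ) 1) → (∀ x, b x ∈ Set.Icc (0:ℝ) 1) →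
      (∀ x, c x ∈ Set.Icc (0:ℝ) 1) →
      (∫ x, |a x - c x| ∂μ) ≤ (∫ x, |a x - b x| ∂μ) + ∫ x, |b x - c x| ∂μ := by
    intro μ _ a b c ha hb hc ha01 hb01 hc01
    calc (∫ x, |a x - c x| ∂μ) ≤ ∫ x, (|a x - b x| + |b x - c x|) ∂μ := by
          refine integral_mono (hint μ a c ha hc ha01 hc01)
            ((hint μ a b ha hb ha01 hb01).add (hint μ b c hb hc hb01 hc01)) ?_
          intro x
          calc |a x - c x| = |(a x - b x) + (b x - c x)| := by ring_nf
            _ ≤ _ := abs_add_le _ _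
      _ = _ := integral_add (hint μ a b ha hb ha01 hb01) (hint μ b c hb hc hb01 hc01)
  have shiftS : ∀ (a b : X → ℝ), Measurable a → Measurable b →
      (∀ x, a x ∈ Set.Icc (0:ℝ) 1) → (∀ x, b x ∈ Set.Icc (0:ℝ) 1) →
      (∫ x, |a x - b x| ∂μT) ≤ (∫ x, |a x - b x| ∂μS) + ∫ x, |φS x - φT x| ∂ν := by
    intro a b ha hb ha01 hb01
    exact shift_lemma ν φS φT hφS hφT hφS0 hφT0 (fun x => |a x - b x|)
      (ha.sub hb).abs (fun x => (habs01 a b ha01 hb01 x).1)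
      (fun x => (habs01 a b ha01 hb01 x).2)
  rcases le_total (∫ x, |fS x - fT x| ∂μS) (∫ x, |fS x - fT x| ∂μT) with hm | hm
  · rw [min_eq_left hm]
    have h1 := shiftS h fT hh hfT hh01 hfT01
    have h2 := tri μS h fS fT hh hfS hfT hh01 hfS01 hfT01
    linarith
  · rw [min_eq_right hm]
    have h1 := tri μT h fS fT hh hfS hfT hh01 hfS01 hfT01
    have h2 := shiftS h fS hh hfS hh01 hfS01
    linarith
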